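/- Let X = LRᵀ be balanced with compact SVD X = UΣVᵀ, L = UΣ^{1/2}, R = VΣ^{1/2}. Then for any G ∈ ℝ^{m×n}, ‖GR‖_F² + ‖GᵀL‖_F² ≤ 2‖X‖₂·‖GVVᵀ + UUᵀG − UUᵀGVVᵀ‖_F². -/

import Mathlib

/-!
Write `P = U Uᵀ` and `Q = V Vᵀ` for the orthogonal projections and `T = G Q + P G - P G Q`.
`T` splits orthogonally both as `P G + (1 - P) G Q` and as `G Q + P G (1 - Q)`, so `‖T‖_F²`
dominates both `‖Uᵀ G‖_F² = ‖P G‖_F²` and `‖G V‖_F² = ‖G Q‖_F²`. On the other hand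
`G R = (G V) Σ^{1/2}` and `Gᵀ L = (Gᵀ U) Σ^{1/2}`, and every `σᵢ` is at most `‖X‖₂` because `X`
maps the `i`-th column of `V` to `σᵢ` times the `i`-th column of `U`. Hence
`‖G R‖_F² + ‖Gᵀ L‖_F² ≤ ‖X‖₂ (‖G V‖_F² + ‖Uᵀ G‖_F²) ≤ 2 ‖X‖₂ ‖T‖_F²`.
-/

open Matrix

/-- Frobenius inner product of two real matrices. -/
def frobInner {m n : ℕ} (A B : Matrix (Fin m) (Fin n) ℝ) : ℝ := ∑ i, ∑ j, A i j * B i j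

/-- Frobenius norm of a real matrix. -/
noncomputable def frobNorm {m n : ℕ} (A : Matrix (Fin m) (Fin n) ℝ) : ℝ :=
  Real.sqrt (frobInner A A)

/-- Spectral norm (largest singular value) of a real matrix, as the operator norm
of the induced linear map between Euclidean spaces. -/
noncomputable def specNorm {m n : ℕ} (A : Matrix (Fin m) (Fin n) ℝ) : ℝ :=
  ‖LinearMap.toContinuousLinearMap (Matrix.toEuclideanLin A)‖

section FrobeniusInner

variable {m n p : ℕ}

lemma frobInner_eq_trace (A B : Matrix (Fin m) (Fin n) ℝ) : frobInner A B = trace (Aᵀ * B) := by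
  simp only [frobInner, trace, diag, mul_apply, transpose_apply]
  exact Finset.sum_comm

lemma frobInner_self_nonneg (A : Matrix (Fin m) (Fin n) ℝ) : 0 ≤ frobInner A A :=
  Finset.sum_nonneg fun _ _ => Finset.sum_nonneg fun _ _ => mul_self_nonneg _

lemma frobNorm_sq (A : Matrix (Fin m) (Fin n) ℝ) : frobNorm A ^ 2 = frobInner A A :=
  Real.sq_sqrt (frobInner_self_nonneg A)

lemma frobInner_transpose (A B : Matrix (Fin m) (Fin n) ℝ) :
    frobInner Aᵀ Bᵀ = frobInner A B :=
  Finset.sum_comm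

lemma frobInner_mul_left (A : Matrix (Fin m) (Fin p) ℝ) (B : Matrix (Fin p) (Fin n) ℝ)
    (C : Matrix (Fin m) (Fin n) ℝ) : frobInner (A * B) C = frobInner B (Aᵀ * C) := by
  simp only [frobInner_eq_trace, transpose_mul, Matrix.mul_assoc]

lemma frobInner_mul_right (A : Matrix (Fin m) (Fin p) ℝ) (B : Matrix (Fin p) (Fin n) ℝ)
    (C : Matrix (Fin m) (Fin n) ℝ) : frobInner (A * B) C = frobInner A (C * Bᵀ) := by
  rw [← frobInner_transpose, transpose_mul, frobInner_mul_left, ← frobInner_transpose,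
    transpose_mul]
  simp only [transpose_transpose]

lemma frobInner_add_self (A B : Matrix (Fin m) (Fin n) ℝ) :
    frobInner (A + B) (A + B) = frobInner A A + 2 * frobInner A B + frobInner B B := by
  simp only [frobInner, Matrix.add_apply, Finset.mul_sum, ← Finset.sum_add_distrib]
  exact Finset.sum_congr rfl fun _ _ => Finset.sum_congr rfl fun _ _ => by ring

lemma frobInner_self_le_of_frobInner_eq_zero {A B : Matrix (Fin m) (Fin n) ℝ}
    (h : frobInner A B = 0) : frobInner A A ≤ frobInner (A + B) (A + B) := by
  rw [frobInner_add_self, h]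
  linarith [frobInner_self_nonneg B]

end FrobeniusInner

section Orthonormal

variable {m n k : ℕ} {U : Matrix (Fin m) (Fin k) ℝ}

lemma frobInner_mul_self_of_transpose_mul_self_eq_one (hU : Uᵀ * U = 1)
    (A : Matrix (Fin k) (Fin n) ℝ) : frobInner (U * A) (U * A) = frobInner A A := by
  rw [frobInner_mul_left, ← Matrix.mul_assoc, hU, Matrix.one_mul]

lemma frobInner_mul_transpose_self_of_transpose_mul_self_eq_one (hU : Uᵀ * U = 1)
    (A : Matrix (Fin n) (Fin k) ℝ) : frobInner (A * Uᵀ) (A * Uᵀ) = frobInner A A := by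
  rw [frobInner_mul_right, transpose_transpose, Matrix.mul_assoc, hU, Matrix.mul_one]

lemma frobInner_proj_mul_one_sub_proj_mul_eq_zero (hU : Uᵀ * U = 1)
    (A B : Matrix (Fin m) (Fin n) ℝ) : frobInner (U * Uᵀ * A) ((1 - U * Uᵀ) * B) = 0 := by
  have hUP : Uᵀ * (1 - U * Uᵀ) = 0 := by
    rw [Matrix.mul_sub, Matrix.mul_one, ← Matrix.mul_assoc, hU, Matrix.one_mul, sub_self]
  rw [Matrix.mul_assoc, frobInner_mul_left, ← Matrix.mul_assoc Uᵀ, hUP, Matrix.zero_mul]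
  simp [frobInner]

lemma frobInner_mul_proj_mul_one_sub_proj_eq_zero {V : Matrix (Fin n) (Fin k) ℝ}
    (hV : Vᵀ * V = 1) (A B : Matrix (Fin m) (Fin n) ℝ) :
    frobInner (A * V * Vᵀ) (B * (1 - V * Vᵀ)) = 0 := by
  have hPV : (1 - V * Vᵀ) * V = 0 := by
    rw [Matrix.sub_mul, Matrix.one_mul, Matrix.mul_assoc, hV, Matrix.mul_one, sub_self]
  rw [frobInner_mul_right, transpose_transpose, Matrix.mul_assoc B, hPV, Matrix.mul_zero]
  simp [frobInner]

lemma norm_toLp_col_eq_one (hU : Uᵀ * U = 1) (j : Fin k) :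
    ‖(WithLp.toLp 2 fun i => U i j : EuclideanSpace ℝ (Fin m))‖ = 1 := by
  have h : ‖(WithLp.toLp 2 fun i => U i j : EuclideanSpace ℝ (Fin m))‖ ^ 2 = 1 := by
    rw [EuclideanSpace.real_norm_sq_eq]
    simpa [mul_apply, sq] using congrFun (congrFun hU j) j
  exact (pow_eq_one_iff_of_nonneg (norm_nonneg _) two_ne_zero).1 h

lemma singularValue_le_specNorm {V : Matrix (Fin n) (Fin k) ℝ} {σ : Fin k → ℝ}
    (hU : Uᵀ * U = 1) (hV : Vᵀ * V = 1) {j : Fin k} (hσ : 0 ≤ σ j) :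
    σ j ≤ specNorm (U * diagonal σ * Vᵀ) := by
  set X := U * diagonal σ * Vᵀ
  have hXV : X *ᵥ (fun i => V i j) = σ j • fun i => U i j := by
    have hXV : X * V = U * diagonal σ := by rw [Matrix.mul_assoc, hV, Matrix.mul_one]
    funext i
    have hXVij := congrFun (congrFun hXV i) j
    rw [mul_diagonal, mul_apply] at hXVij
    simpa [mulVec, dotProduct, mul_comm] using hXVij
  set f := LinearMap.toContinuousLinearMap (toEuclideanLin X)
  have hfv : f (WithLp.toLp 2 fun i => V i j) = WithLp.toLp 2 (σ j • fun i => U i j) := by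
    rw [← hXV]
    rfl
  calc σ j = ‖f (WithLp.toLp 2 fun i => V i j)‖ := by
        rw [hfv, WithLp.toLp_smul, norm_smul, norm_toLp_col_eq_one hU, Real.norm_of_nonneg hσ,
          mul_one]
    _ ≤ ‖f‖ * ‖(WithLp.toLp 2 fun i => V i j : EuclideanSpace ℝ (Fin n))‖ := f.le_opNorm _
    _ = specNorm X := by rw [norm_toLp_col_eq_one hV, mul_one]; rfl

end Orthonormal

lemma frobInner_mul_diagonal_sqrt_le {m k : ℕ} {σ : Fin k → ℝ} {c : ℝ} (hσ : ∀ j, 0 ≤ σ j)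
    (hσc : ∀ j, σ j ≤ c) (A : Matrix (Fin m) (Fin k) ℝ) :
    frobInner (A * diagonal fun j => √(σ j)) (A * diagonal fun j => √(σ j)) ≤
      c * frobInner A A := by
  simp only [frobInner, mul_diagonal, Finset.mul_sum]
  refine Finset.sum_le_sum fun i _ => Finset.sum_le_sum fun j _ => ?_
  calc A i j * √(σ j) * (A i j * √(σ j)) = σ j * (A i j * A i j) := by
        rw [mul_mul_mul_comm, Real.mul_self_sqrt (hσ j), mul_comm]
    _ ≤ c * (A i j * A i j) := mul_le_mul_of_nonneg_right (hσc j) (mul_self_nonneg _)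

/-- **Upper bound for the balanced gradient via the Riemannian gradient.** For a
balanced factorization `X = L Rᵀ` with compact SVD `X = U Σ Vᵀ`, for every `G`,
`‖G R‖_F² + ‖Gᵀ L‖_F² ≤ 2 ‖X‖₂ ‖G V Vᵀ + U Uᵀ G - U Uᵀ G V Vᵀ‖_F²`. -/
theorem balanced_gradient_upper_bound
    {m n k : ℕ} (U : Matrix (Fin m) (Fin k) ℝ) (V : Matrix (Fin n) (Fin k) ℝ)
    (σ : Fin k → ℝ)
    (hU : Uᵀ * U = 1) (hV : Vᵀ * V = 1) (hσ : ∀ i, 0 ≤ σ i)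
    (X : Matrix (Fin m) (Fin n) ℝ) (hX : X = U * Matrix.diagonal σ * Vᵀ)
    (L : Matrix (Fin m) (Fin k) ℝ) (hL : L = U * Matrix.diagonal (fun i => Real.sqrt (σ i)))
    (R : Matrix (Fin n) (Fin k) ℝ) (hR : R = V * Matrix.diagonal (fun i => Real.sqrt (σ i)))
    (G : Matrix (Fin m) (Fin n) ℝ) :
    frobNorm (G * R) ^ 2 + frobNorm (Gᵀ * L) ^ 2 ≤
      2 * specNorm X * frobNorm (G * V * Vᵀ + U * Uᵀ * G - U * Uᵀ * G * V * Vᵀ) ^ 2 := by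
  set T := G * V * Vᵀ + U * Uᵀ * G - U * Uᵀ * G * V * Vᵀ
  have hσX : ∀ j, σ j ≤ specNorm X := fun j => hX ▸ singularValue_le_specNorm hU hV (hσ j)
  have hGR : frobInner (G * R) (G * R) ≤ specNorm X * frobInner (G * V) (G * V) := by
    rw [hR, ← Matrix.mul_assoc]
    exact frobInner_mul_diagonal_sqrt_le hσ hσX _
  have hGL : frobInner (Gᵀ * L) (Gᵀ * L) ≤ specNorm X * frobInner (Uᵀ * G) (Uᵀ * G) := by
    rw [hL, ← Matrix.mul_assoc, ← frobInner_transpose (Uᵀ * G), transpose_mul, transpose_transpose]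
    exact frobInner_mul_diagonal_sqrt_le hσ hσX _
  have hGV_le : frobInner (G * V) (G * V) ≤ frobInner T T := by
    have hT : T = G * V * Vᵀ + U * Uᵀ * G * (1 - V * Vᵀ) := by
      simp only [T, Matrix.mul_sub, Matrix.mul_one, Matrix.mul_assoc, add_sub_assoc]
    rw [← frobInner_mul_transpose_self_of_transpose_mul_self_eq_one hV, hT]
    exact frobInner_self_le_of_frobInner_eq_zero
      (frobInner_mul_proj_mul_one_sub_proj_eq_zero hV _ _)
  have hUG_le : frobInner (Uᵀ * G) (Uᵀ * G) ≤ frobInner T T := by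
    have hT : T = U * Uᵀ * G + (1 - U * Uᵀ) * (G * V * Vᵀ) := by
      simp only [T, Matrix.sub_mul, Matrix.one_mul, Matrix.mul_assoc]
      abel
    rw [← frobInner_mul_self_of_transpose_mul_self_eq_one hU, ← Matrix.mul_assoc, hT]
    exact frobInner_self_le_of_frobInner_eq_zero
      (frobInner_proj_mul_one_sub_proj_mul_eq_zero hU _ _)
  have hX_nonneg : 0 ≤ specNorm X := norm_nonneg _
  rw [frobNorm_sq, frobNorm_sq, frobNorm_sq]
  linarith [mul_le_mul_of_nonneg_left (add_le_add hGV_le hUG_le) hX_nonneg]
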